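/- arXiv:math/0610414 — 2 statements merged into one kernel-verified Lean document; each statement's English description precedes it below -/
import Mathlib

section
/- Let n be a natural number and let μ be a partition of n. Then the class sum s_μ lies in the ℚ-subalgebra of the group algebra ℚ[S_n] generated by the cycle sums {s_i : 1 ≤ i ≤ supp(μ)}. -/
/-- `classSum n m` is the sum, in the group algebra `ℚ[Sₙ]`, of all permutations
whose cycle type is the multiset `m` (parts of size 1 being suppressed, as in
Mathlib's `Equiv.Perm.cycleType`). -/
noncomputable def classSum (n : ℕ) (m : Multiset ℕ) : MonoidAlgebra ℚ (Equiv.Perm (Fin n)) :=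
  ∑ σ ∈ Finset.univ.filter (fun σ : Equiv.Perm (Fin n) => σ.cycleType = m),
    MonoidAlgebra.single σ (1 : ℚ)

/-- The cycle sum `sᵢ`: the sum of all `i`-cycles in `Sₙ` for `i ≥ 2`, and the
identity of `ℚ[Sₙ]` for `i ≤ 1`. -/
noncomputable def cycleSum (n i : ℕ) : MonoidAlgebra ℚ (Equiv.Perm (Fin n)) :=
  if i < 2 then 1 else classSum n {i}

/-- The support of a partition `μ` of `n`: the sum of the parts of size at
least 2, i.e. `n` minus the number of parts equal to 1. -/
def Nat.Partition.supp {n : ℕ} (μ : n.Partition) : ℕ :=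
  (μ.parts.filter (2 ≤ ·)).sum

/-!
Strong induction on `m.sum`, for the class sum `C_m` of an arbitrary multiset `m`. If `m` is the
cycle type of some `σ₀` (otherwise `C_m = 0`), consider `P = ∏_{a ∈ m} s_a`, which lies in the
algebra generated by `s_1, …, s_{m.sum}`. The coefficient of `P` at `σ` is nonzero only if `σ` is
a product of cycles of the lengths `a ∈ m`; such a product moves at most `m.sum` points, and
exactly `m.sum` points only if the cycles are disjoint, i.e. only if `σ` has cycle type `m`.
The coefficients of `P` are nonnegative, so nothing cancels and the factorisation of `σ₀` into
disjoint cycles gives `P(σ₀) ≥ 1`; and `P` is central, hence constant on conjugacy classes.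
So `C_m - P / P(σ₀)` is a combination of class sums `C_{m'}` with `m'.sum < m.sum`, which are
covered by induction.
-/

open Equiv Equiv.Perm Finset

namespace MonoidAlgebra

section Semiring

variable {R G : Type*} [Semiring R]

theorem exists_mul_eq_of_coeff_mul_ne_zero [Mul G] {x y : MonoidAlgebra R G} {g : G}
    (h : (x * y).coeff g ≠ 0) : ∃ a b, x.coeff a ≠ 0 ∧ y.coeff b ≠ 0 ∧ a * b = g := by
  classical
  obtain ⟨a, ha, b, hb, hab⟩ :=
    Finset.mem_mul.mp (support_coeff_mul_subset x y (Finsupp.mem_support_iff.mpr h))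
  exact ⟨a, b, Finsupp.mem_support_iff.mp ha, Finsupp.mem_support_iff.mp hb, hab⟩

theorem coeff_one_apply [One G] [DecidableEq G] (g : G) :
    (1 : MonoidAlgebra R G).coeff g = if g = 1 then 1 else 0 := by
  simp [one_def, Finsupp.single_apply, eq_comm]

variable [PartialOrder R] [IsOrderedRing R]

theorem coeff_one_nonneg [One G] (g : G) : 0 ≤ (1 : MonoidAlgebra R G).coeff g := by
  classical
  rw [coeff_one_apply]
  split_ifs
  exacts [zero_le_one, le_rfl]

variable [Mul G] {x y : MonoidAlgebra R G}

theorem coeff_mul_nonneg (hx : ∀ g, 0 ≤ x.coeff g) (hy : ∀ g, 0 ≤ y.coeff g) (g : G) :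
    0 ≤ (x * y).coeff g := by
  classical
  rw [coeff_mul]
  exact sum_nonneg fun a _ => sum_nonneg fun b _ => by
    dsimp only
    split_ifs
    exacts [mul_nonneg (hx a) (hy b), le_rfl]

theorem coeff_mul_coeff_le_coeff_mul (hx : ∀ g, 0 ≤ x.coeff g) (hy : ∀ g, 0 ≤ y.coeff g)
    (a b : G) : x.coeff a * y.coeff b ≤ (x * y).coeff (a * b) := by
  classical
  by_cases ha : x.coeff a = 0
  · simpa [ha] using coeff_mul_nonneg hx hy (a * b)
  by_cases hb : y.coeff b = 0
  · simpa [hb] using coeff_mul_nonneg hx hy (a * b)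
  have hterm (a' b' : G) : 0 ≤ if a' * b' = a * b then x.coeff a' * y.coeff b' else 0 := by
    split_ifs
    exacts [mul_nonneg (hx a') (hy b'), le_rfl]
  rw [coeff_mul]
  calc x.coeff a * y.coeff b
      ≤ ∑ b' ∈ y.coeff.support, if a * b' = a * b then x.coeff a * y.coeff b' else 0 :=
        (if_pos rfl).symm.trans_le
          (single_le_sum (fun b' _ => hterm a b') (Finsupp.mem_support_iff.mpr hb))
    _ ≤ _ := single_le_sum (f := fun a' => ∑ b' ∈ y.coeff.support,
          if a' * b' = a * b then x.coeff a' * y.coeff b' else 0)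
        (fun a' _ => sum_nonneg fun b' _ => hterm a' b') (Finsupp.mem_support_iff.mpr ha)

end Semiring

section Group

variable {k G : Type*} [CommSemiring k] [Group G] {x : MonoidAlgebra k G}

theorem mem_center_iff_coeff_conj :
    x ∈ Subalgebra.center k (MonoidAlgebra k G) ↔ ∀ c g, x.coeff (c * g * c⁻¹) = x.coeff g := by
  rw [Subalgebra.mem_center_iff]
  refine ⟨fun hx c g => ?_, fun hx b => ?_⟩
  · simpa [mul_assoc] using congr(($(hx (single c 1))).coeff (c * g)).symm
  induction b using MonoidAlgebra.induction_on with
  | of g => ext h; simpa using (hx g (g⁻¹ * h)).symm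
  | add b₁ b₂ h₁ h₂ => rw [add_mul, mul_add, h₁, h₂]
  | smul r b hb => rw [smul_mul_assoc, mul_smul_comm, hb]

end Group

theorem coeff_eq_of_cycleType_eq {k α : Type*} [CommSemiring k] [Fintype α] [DecidableEq α]
    {x : MonoidAlgebra k (Perm α)} (hx : x ∈ Subalgebra.center k (MonoidAlgebra k (Perm α)))
    {σ τ : Perm α} (h : σ.cycleType = τ.cycleType) : x.coeff σ = x.coeff τ := by
  obtain ⟨c, rfl⟩ := isConj_iff.mp (isConj_iff_cycleType_eq.mpr h)
  exact (mem_center_iff_coeff_conj.mp hx c σ).symm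

end MonoidAlgebra

theorem Equiv.Perm.disjoint_of_card_support_add_le {α : Type*} [Fintype α] [DecidableEq α]
    {f g : Perm α} (h : #f.support + #g.support ≤ #(f * g).support) : f.Disjoint g := by
  rw [disjoint_iff_disjoint_support, Finset.disjoint_iff_inter_eq_empty, ← card_eq_zero]
  have hunion := card_union_add_card_inter f.support g.support
  have hmul : #(f * g).support ≤ #(f.support ∪ g.support) := card_le_card (support_mul_le f g)
  omega

open MonoidAlgebra

variable {n : ℕ}

theorem coeff_classSum (m : Multiset ℕ) (σ : Perm (Fin n)) :
    (classSum n m).coeff σ = if σ.cycleType = m then 1 else 0 := by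
  simp [classSum, coeff_sum, Finsupp.single_apply]

theorem classSum_mem_center (m : Multiset ℕ) :
    classSum n m ∈ Subalgebra.center ℚ (MonoidAlgebra ℚ (Perm (Fin n))) :=
  mem_center_iff_coeff_conj.mpr fun c σ => by simp only [coeff_classSum, cycleType_conj]

theorem cycleSum_mem_center (i : ℕ) :
    cycleSum n i ∈ Subalgebra.center ℚ (MonoidAlgebra ℚ (Perm (Fin n))) := by
  unfold cycleSum
  split_ifs
  exacts [one_mem _, classSum_mem_center _]

theorem coeff_cycleSum_nonneg (i : ℕ) (σ : Perm (Fin n)) : 0 ≤ (cycleSum n i).coeff σ := by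
  unfold cycleSum
  split_ifs
  · exact coeff_one_nonneg σ
  · rw [coeff_classSum]
    split_ifs
    exacts [zero_le_one, le_rfl]

theorem cycleType_eq_of_coeff_cycleSum_ne_zero {i : ℕ} (hi : 2 ≤ i) {σ : Perm (Fin n)}
    (h : (cycleSum n i).coeff σ ≠ 0) : σ.cycleType = {i} := by
  rw [cycleSum, if_neg (by omega), coeff_classSum] at h
  exact of_not_not fun h' => h (if_neg h')

theorem coeff_cycleSum_card_support {σ : Perm (Fin n)} (hσ : σ.IsCycle) :
    (cycleSum n #σ.support).coeff σ = 1 := by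
  rw [cycleSum, if_neg (by have := hσ.two_le_card_support; omega), coeff_classSum,
    if_pos hσ.cycleType]

theorem mem_span_classSum_of_mem_center {x : MonoidAlgebra ℚ (Perm (Fin n))}
    (hx : x ∈ Subalgebra.center ℚ (MonoidAlgebra ℚ (Perm (Fin n)))) :
    x ∈ Submodule.span ℚ (classSum n '' {m | ∃ σ, x.coeff σ ≠ 0 ∧ σ.cycleType = m}) := by
  have hfiber (σ₀ : Perm (Fin n)) : ∑ σ with σ.cycleType = σ₀.cycleType, single σ (x.coeff σ) =
      x.coeff σ₀ • classSum n σ₀.cycleType := by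
    rw [classSum, smul_sum]
    refine sum_congr rfl fun σ hσ => ?_
    rw [smul_single, smul_eq_mul, mul_one, coeff_eq_of_cycleType_eq hx (mem_filter.mp hσ).2]
  have hsum : ∑ m ∈ (univ : Finset (Perm (Fin n))).image cycleType,
      ∑ σ with σ.cycleType = m, single σ (x.coeff σ) ∈
        Submodule.span ℚ (classSum n '' {m | ∃ σ, x.coeff σ ≠ 0 ∧ σ.cycleType = m}) := by
    refine sum_mem fun m hm => ?_
    obtain ⟨σ₀, -, rfl⟩ := mem_image.mp hm
    rw [hfiber]
    by_cases h0 : x.coeff σ₀ = 0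
    · simp [h0]
    · exact Submodule.smul_mem _ _ (Submodule.subset_span ⟨_, ⟨σ₀, h0, rfl⟩, rfl⟩)
  rwa [sum_fiberwise_of_maps_to fun σ _ => mem_image_of_mem cycleType (mem_univ σ),
    ← Finsupp.sum_fintype _ _ (by simp), sum_coeff_single] at hsum

-- The cycle sums commute, so their product over a multiset is formed in the commutative centre.
noncomputable def cycleSumProd (n : ℕ) (m : Multiset ℕ) : MonoidAlgebra ℚ (Perm (Fin n)) :=
  ((m.map fun i => (⟨cycleSum n i, cycleSum_mem_center i⟩ :
    Subalgebra.center ℚ (MonoidAlgebra ℚ (Perm (Fin n))))).prod :)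

theorem cycleSumProd_mem_center (m : Multiset ℕ) :
    cycleSumProd n m ∈ Subalgebra.center ℚ (MonoidAlgebra ℚ (Perm (Fin n))) :=
  Subtype.prop _

@[simp]
theorem cycleSumProd_zero : cycleSumProd n 0 = 1 := by
  simp [cycleSumProd]

theorem cycleSumProd_add (m m' : Multiset ℕ) :
    cycleSumProd n (m + m') = cycleSumProd n m * cycleSumProd n m' := by
  simp [cycleSumProd]

theorem cycleSumProd_singleton (i : ℕ) : cycleSumProd n {i} = cycleSum n i := by
  simp [cycleSumProd]

theorem cycleSumProd_cons (i : ℕ) (m : Multiset ℕ) :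
    cycleSumProd n (i ::ₘ m) = cycleSum n i * cycleSumProd n m := by
  rw [← Multiset.singleton_add, cycleSumProd_add, cycleSumProd_singleton]

theorem coeff_cycleSumProd_nonneg (m : Multiset ℕ) (σ : Perm (Fin n)) :
    0 ≤ (cycleSumProd n m).coeff σ := by
  induction m using Multiset.induction_on generalizing σ with
  | empty => simpa using coeff_one_nonneg σ
  | cons i m ih =>
    rw [cycleSumProd_cons]
    exact coeff_mul_nonneg (coeff_cycleSum_nonneg i) ih σ

theorem one_le_coeff_cycleSumProd_cycleType (σ : Perm (Fin n)) :
    1 ≤ (cycleSumProd n σ.cycleType).coeff σ := by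
  induction σ using cycle_induction_on with
  | base_one => simp
  | base_cycles σ hσ =>
    rw [hσ.cycleType, cycleSumProd_singleton, coeff_cycleSum_card_support hσ]
  | induction_disjoint σ τ hd _ hσ hτ =>
    rw [hd.cycleType_mul, cycleSumProd_add]
    calc (1 : ℚ) = 1 * 1 := (one_mul 1).symm
      _ ≤ _ := mul_le_mul hσ hτ zero_le_one (coeff_cycleSumProd_nonneg _ σ)
      _ ≤ _ := coeff_mul_coeff_le_coeff_mul (coeff_cycleSumProd_nonneg _)
        (coeff_cycleSumProd_nonneg _) σ τ

theorem card_support_lt_or_cycleType_eq_of_coeff_cycleSumProd_ne_zero {m : Multiset ℕ}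
    (hm : ∀ i ∈ m, 2 ≤ i) {σ : Perm (Fin n)} (h : (cycleSumProd n m).coeff σ ≠ 0) :
    #σ.support < m.sum ∨ σ.cycleType = m := by
  induction m using Multiset.induction_on generalizing σ with
  | empty =>
    rw [cycleSumProd_zero, coeff_one_apply, ite_ne_right_iff] at h
    simp [h.1]
  | cons i m ih =>
    rw [cycleSumProd_cons] at h
    obtain ⟨g, τ, hg, hτ, rfl⟩ := exists_mul_eq_of_coeff_mul_ne_zero h
    have hg_type := cycleType_eq_of_coeff_cycleSum_ne_zero (hm i (Multiset.mem_cons_self i m)) hg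
    have hg_card : #g.support = i := by rw [← sum_cycleType, hg_type, Multiset.sum_singleton]
    have hle : #(g * τ).support ≤ #g.support + #τ.support :=
      (card_le_card (support_mul_le g τ)).trans (card_union_le _ _)
    rw [Multiset.sum_cons]
    rcases ih (fun j hj => hm j (Multiset.mem_cons_of_mem hj)) hτ with hτ_lt | hτ_type
    · exact Or.inl (by omega)
    have hτ_card : #τ.support = m.sum := by rw [← sum_cycleType, hτ_type]
    refine (lt_or_ge _ _).imp id fun hge => ?_
    rw [(disjoint_of_card_support_add_le (by omega)).cycleType_mul, hg_type, hτ_type,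
      Multiset.singleton_add]

noncomputable def cycleSumAlgebra (n k : ℕ) : Subalgebra ℚ (MonoidAlgebra ℚ (Perm (Fin n))) :=
  Algebra.adjoin ℚ {x | ∃ i, 1 ≤ i ∧ i ≤ k ∧ x = cycleSum n i}

theorem cycleSumAlgebra_mono {k l : ℕ} (h : k ≤ l) : cycleSumAlgebra n k ≤ cycleSumAlgebra n l :=
  Algebra.adjoin_mono fun _ ⟨i, h1, h2, hx⟩ => ⟨i, h1, h2.trans h, hx⟩

theorem cycleSumProd_mem_cycleSumAlgebra {m : Multiset ℕ} {k : ℕ}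
    (hm : ∀ i ∈ m, 1 ≤ i ∧ i ≤ k) : cycleSumProd n m ∈ cycleSumAlgebra n k := by
  induction m using Multiset.induction_on with
  | empty => simp
  | cons i m ih =>
    rw [cycleSumProd_cons]
    obtain ⟨h1, h2⟩ := hm i (Multiset.mem_cons_self i m)
    exact mul_mem (Algebra.subset_adjoin ⟨i, h1, h2, rfl⟩)
      (ih fun j hj => hm j (Multiset.mem_cons_of_mem hj))

theorem classSum_sub_smul_cycleSumProd_mem_span (σ₀ : Perm (Fin n)) :
    classSum n σ₀.cycleType -
        ((cycleSumProd n σ₀.cycleType).coeff σ₀)⁻¹ • cycleSumProd n σ₀.cycleType ∈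
      Submodule.span ℚ (classSum n '' {m | m.sum < σ₀.cycleType.sum}) := by
  set P := cycleSumProd n σ₀.cycleType
  have hP₀ : P.coeff σ₀ ≠ 0 := ((one_le_coeff_cycleSumProd_cycleType σ₀).trans_lt' one_pos).ne'
  refine Submodule.span_mono ?_ (mem_span_classSum_of_mem_center
    (sub_mem (classSum_mem_center _) (Subalgebra.smul_mem _ (cycleSumProd_mem_center _) _)))
  refine Set.image_mono fun _ ⟨σ, hσ, hσ_type⟩ => hσ_type ▸ ?_
  contrapose! hσ
  rw [coeff_sub, Finsupp.sub_apply, coeff_smul_apply, coeff_classSum, smul_eq_mul]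
  by_cases hσ_type' : σ.cycleType = σ₀.cycleType
  · rw [if_pos hσ_type', coeff_eq_of_cycleType_eq (cycleSumProd_mem_center _) hσ_type',
      inv_mul_cancel₀ hP₀, sub_self]
  · have hPσ : P.coeff σ = 0 := by
      by_contra hPσ
      rcases card_support_lt_or_cycleType_eq_of_coeff_cycleSumProd_ne_zero
        (fun i => two_le_of_mem_cycleType) hPσ with hlt | heq
      · exact hσ ((sum_cycleType σ).trans_lt hlt)
      · exact hσ_type' heq
    rw [if_neg hσ_type', hPσ, mul_zero, sub_zero]

theorem classSum_mem_cycleSumAlgebra (n : ℕ) (m : Multiset ℕ) :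
    classSum n m ∈ cycleSumAlgebra n m.sum := by
  by_cases hm : ∃ σ₀ : Perm (Fin n), σ₀.cycleType = m
  swap
  · rw [classSum, sum_eq_zero fun σ hσ => absurd ⟨σ, (mem_filter.mp hσ).2⟩ hm]
    exact zero_mem _
  obtain ⟨σ₀, rfl⟩ := hm
  have hP : cycleSumProd n σ₀.cycleType ∈ cycleSumAlgebra n σ₀.cycleType.sum :=
    cycleSumProd_mem_cycleSumAlgebra fun i hi =>
      ⟨by linarith [two_le_of_mem_cycleType hi], Multiset.le_sum_of_mem hi⟩
  have hlower : Submodule.span ℚ (classSum n '' {m | m.sum < σ₀.cycleType.sum}) ≤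
      Subalgebra.toSubmodule (cycleSumAlgebra n σ₀.cycleType.sum) := by
    refine Submodule.span_le.mpr ?_
    rintro _ ⟨m, hm, rfl⟩
    exact cycleSumAlgebra_mono hm.le (classSum_mem_cycleSumAlgebra n m)
  simpa using add_mem (hlower (classSum_sub_smul_cycleSumProd_mem_span σ₀))
    (Subalgebra.smul_mem _ hP ((cycleSumProd n σ₀.cycleType).coeff σ₀)⁻¹)
termination_by m.sum

/-- For any partition `μ` of `n`, the class sum `s_μ` lies in
the ℚ-subalgebra of `ℚ[Sₙ]` generated by the cycle sums `sᵢ` for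
`1 ≤ i ≤ supp μ`. -/
theorem classSum_mem_adjoin_cycleSums (n : ℕ) (μ : n.Partition) :
    classSum n (μ.parts.filter (2 ≤ ·)) ∈
      Algebra.adjoin ℚ {x : MonoidAlgebra ℚ (Equiv.Perm (Fin n)) |
        ∃ i, 1 ≤ i ∧ i ≤ μ.supp ∧ x = cycleSum n i} :=
  classSum_mem_cycleSumAlgebra n _
end

section
/- Let μ be a nonempty partition (a Young diagram with at least one cell) and let d ≥ 2 be a natural number. Then there exists a cell in the first row or the first column of the Young diagram of μ whose hook length is not divisible by d. (This is the combinatorial core of the lemma that a self-conjugate partition with a diagonal hook length divisible by an odd prime p labels a reducible Specht module.) -/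
/-- Every nonempty Young diagram has a cell in its first row
or first column whose hook length is not divisible by `d`, for any `d ≥ 2`.
Here the hook length of the cell `(i, j)` (rows and columns indexed from `0`)
is `(rowLen i − j) + (colLen j − i) − 1`. -/
theorem exists_hookLength_not_dvd (μ : YoungDiagram) (hμ : μ.cells.Nonempty)
    (d : ℕ) (hd : 2 ≤ d) :
    ∃ i j, (i, j) ∈ μ ∧ (i = 0 ∨ j = 0) ∧
      ¬ d ∣ ((μ.rowLen i - j) + (μ.colLen j - i) - 1) := by
  by_contra hcon
  push_neg at hcon
  obtain ⟨⟨i, j⟩, hij⟩ := hμ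
  have h00 : (0, 0) ∈ μ := μ.up_left_mem (Nat.zero_le _) (Nat.zero_le _) hij
  set a := μ.rowLen 0 with ha_def
  set c := μ.colLen 0 with hc_def
  have ha : 1 ≤ a := by
    have := YoungDiagram.mem_iff_lt_rowLen.mp h00
    omega
  have hcell : (0, a - 1) ∈ μ := YoungDiagram.mem_iff_lt_rowLen.mpr (by omega)
  have h1 := hcon 0 (a - 1) hcell (Or.inl rfl)
  have hcl1 : 1 ≤ μ.colLen (a - 1) := by
    have := YoungDiagram.mem_iff_lt_colLen.mp hcell
    omega
  have h1' : d ∣ μ.colLen (a - 1) := by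
    have : a - (a - 1) + (μ.colLen (a - 1) - 0) - 1 = μ.colLen (a - 1) := by omega
    rwa [this] at h1
  have hcl2 : 2 ≤ μ.colLen (a - 1) :=
    le_trans hd (Nat.le_of_dvd (by omega) h1')
  have hcell2 : (1, a - 1) ∈ μ := YoungDiagram.mem_iff_lt_colLen.mpr (by omega)
  have hrl1 : a ≤ μ.rowLen 1 := by
    have := YoungDiagram.mem_iff_lt_rowLen.mp hcell2
    omega
  have hrl1' : μ.rowLen 1 ≤ a := μ.rowLen_anti 0 1 (by norm_num)
  have hrow1 : μ.rowLen 1 = a := le_antisymm hrl1' hrl1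
  have h10 : (1, 0) ∈ μ := μ.up_left_mem (le_refl 1) (Nat.zero_le _) hcell2
  have hc2 : 2 ≤ c := by
    have := YoungDiagram.mem_iff_lt_colLen.mp h10
    omega
  have h2 := hcon 0 0 h00 (Or.inl rfl)
  have h3 := hcon 1 0 h10 (Or.inr rfl)
  have h2' : d ∣ a + c - 1 := by simpa using h2
  have h3' : d ∣ a + c - 2 := by
    have : μ.rowLen 1 - 0 + (c - 1) - 1 = a + c - 2 := by omega
    rwa [this] at h3
  have : d ∣ 1 := by
    have := Nat.dvd_sub h2' h3'
    have heq : a + c - 1 - (a + c - 2) = 1 := by omega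
    rwa [heq] at this
  have := Nat.le_of_dvd one_pos this
  omega
end
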